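/- arXiv:2108.07042 — 2 statements merged into one kernel-verified Lean document; each statement's English description precedes it below -/
import Mathlib

section
/- Let A be a finite set of k integers such that A ∩ (−A) = {0} (so 0 ∈ A and no nonzero element of A is the negative of an element of A). Then for any integer α with 0 ≤ α ≤ k, |Σ_α(A)| ≥ k(k−1)/2 − α(α−1)/2 + 1. -/
/-- `sigmaAtLeast A α` is the set of all subset sums of `A` coming from
subsets of size at least `α`. -/
def sigmaAtLeast (A : Finset ℤ) (α : ℕ) : Finset ℤ :=
  (A.powerset.filter (fun B => α ≤ B.card)).image (fun B => B.sum id)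

/-!
Removing `0` costs one unit of `α` and nothing else, so it suffices to bound `Σ_β(A)` for a
set `A` of `n` integers with `A ∩ (-A) = ∅` by `C(n+1, 2) - C(β+1, 2) + 1`. Induct on `n`,
starting from `n = β`. After replacing `A` by `-A` if needed, the element `a` of largest absolute
value is positive. If the largest sum of `Σ_β(A \ {a})` is `∑ J`, then the `n` sums
`a + ∑ J + e` for `e ∈ {0} ∪ (A \ {a} \ J) ∪ (-J)` are distinct (as `A ∩ (-A) = ∅`), lie in
`Σ_β(A)` and exceed `∑ J` (as `|e| < a`), so `|Σ_β(A)| ≥ |Σ_β(A \ {a})| + n`.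
-/

open Finset
open scoped Pointwise

lemma mem_sigmaAtLeast {A : Finset ℤ} {β : ℕ} {s : ℤ} :
    s ∈ sigmaAtLeast A β ↔ ∃ B ⊆ A, β ≤ #B ∧ ∑ x ∈ B, x = s := by
  simp [sigmaAtLeast, and_assoc]

lemma sum_mem_sigmaAtLeast {A B : Finset ℤ} {β : ℕ} (hB : B ⊆ A) (hβ : β ≤ #B) :
    ∑ x ∈ B, x ∈ sigmaAtLeast A β :=
  mem_sigmaAtLeast.2 ⟨B, hB, hβ, rfl⟩

lemma sigmaAtLeast_mono {A C : Finset ℤ} (h : A ⊆ C) (β : ℕ) :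
    sigmaAtLeast A β ⊆ sigmaAtLeast C β :=
  image_subset_image (filter_subset_filter _ (powerset_mono.2 h))

lemma sigmaAtLeast_neg (A : Finset ℤ) (β : ℕ) :
    sigmaAtLeast (-A) β = -sigmaAtLeast A β := by
  ext s
  simp only [mem_neg', mem_sigmaAtLeast]
  constructor
  · rintro ⟨B, hB, hβ, rfl⟩
    refine ⟨-B, ?_, by rwa [card_neg], by
      rw [sum_neg_index, sum_neg_distrib (f := fun x => x)]⟩
    simpa using neg_subset_neg hB
  · rintro ⟨B, hB, hβ, hs⟩
    exact ⟨-B, neg_subset_neg hB, by rwa [card_neg], by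
      rw [sum_neg_index, sum_neg_distrib (f := fun x => x), hs, neg_neg]⟩

lemma sigmaAtLeast_eq_sigmaAtLeast_erase_zero {A : Finset ℤ} (h0 : 0 ∈ A) (α : ℕ) :
    sigmaAtLeast A α = sigmaAtLeast (A.erase 0) (α - 1) := by
  ext s
  simp only [mem_sigmaAtLeast]
  constructor
  · rintro ⟨B, hB, hα, rfl⟩
    have := pred_card_le_card_erase (s := B) (a := 0)
    exact ⟨B.erase 0, erase_subset_erase 0 hB, by omega, sum_erase B rfl⟩
  · rintro ⟨B, hB, hα, rfl⟩
    have h0B : 0 ∉ B := fun h => notMem_erase 0 A (hB h)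
    refine ⟨insert 0 B, insert_subset h0 (hB.trans (erase_subset 0 A)), ?_, ?_⟩
    · rw [card_insert_of_notMem h0B]; omega
    · rw [sum_insert h0B, zero_add]

lemma zero_notMem_of_disjoint_neg {A : Finset ℤ} (hA : Disjoint A (-A)) : 0 ∉ A :=
  fun h => disjoint_left.1 hA h (by simpa using h)

lemma Disjoint.neg_of_subset {A B : Finset ℤ} (hA : Disjoint A (-A)) (h : B ⊆ A) :
    Disjoint B (-B) :=
  hA.mono h (neg_subset_neg h)

lemma add_sum_add_mem_sigmaAtLeast {A J : Finset ℤ} {a e : ℤ} {β : ℕ} (ha : a ∈ A)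
    (hJ : J ⊆ A.erase a) (hβ : β ≤ #J) (he : e ∈ insert 0 ((A.erase a \ J) ∪ -J)) :
    a + ∑ x ∈ J, x + e ∈ sigmaAtLeast A β := by
  have haJ : a ∉ J := fun h => notMem_erase a A (hJ h)
  have hJA : insert a J ⊆ A := insert_subset ha (hJ.trans (erase_subset a A))
  have hcard : #(insert a J) = #J + 1 := card_insert_of_notMem haJ
  rcases mem_insert.1 he with rfl | he
  · simpa [sum_insert haJ] using sum_mem_sigmaAtLeast hJA (β := β) (by omega)
  rcases mem_union.1 he with he | he
  · obtain ⟨heA, heJ⟩ := mem_sdiff.1 he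
    have he' : e ∉ insert a J := by simp [heJ, ne_of_mem_erase heA]
    convert sum_mem_sigmaAtLeast (insert_subset (mem_of_mem_erase heA) hJA) (β := β)
      (by rw [card_insert_of_notMem he']; omega) using 1
    rw [sum_insert he', sum_insert haJ]; ring
  · have hj : -e ∈ insert a J := mem_insert_of_mem (mem_neg'.1 he)
    convert sum_mem_sigmaAtLeast ((erase_subset _ _).trans hJA) (β := β)
      (by rw [card_erase_of_mem hj]; omega) using 1
    rw [sum_erase_eq_sub hj, sum_insert haJ]; ring

lemma card_insert_zero_sdiff_union_neg {C J : Finset ℤ} (hC : Disjoint C (-C)) (hJ : J ⊆ C) :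
    #(insert 0 ((C \ J) ∪ -J)) = #C + 1 := by
  have hdisj : Disjoint (C \ J) (-J) := hC.mono sdiff_subset (neg_subset_neg hJ)
  have h0 : (0 : ℤ) ∉ (C \ J) ∪ -J := by
    have := zero_notMem_of_disjoint_neg hC
    simp only [mem_union, mem_sdiff, mem_neg', neg_zero, not_or, not_and]
    exact ⟨fun h => absurd h this, fun h => this (hJ h)⟩
  rw [card_insert_of_notMem h0, card_union_of_disjoint hdisj, card_sdiff_of_subset hJ, card_neg,
    Nat.sub_add_cancel (card_le_card hJ)]

lemma card_sigmaAtLeast_erase_add_card_le {A : Finset ℤ} {a : ℤ} {β : ℕ} (hA : Disjoint A (-A))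
    (ha : a ∈ A) (hmax : ∀ x ∈ A, |x| ≤ a) (hβ : β < #A) :
    #(sigmaAtLeast (A.erase a) β) + #A ≤ #(sigmaAtLeast A β) := by
  have hapos : 0 < a := ((abs_nonneg a).trans (hmax a ha)).lt_of_ne
    fun h => zero_notMem_of_disjoint_neg hA (h ▸ ha)
  set A' := A.erase a
  have hA' : Disjoint A' (-A') := hA.neg_of_subset (erase_subset a A)
  have hlt : ∀ x ∈ A', |x| < a := by
    intro x hx
    refine (hmax x (mem_of_mem_erase hx)).lt_of_ne fun h => ?_
    rcases abs_eq_abs.1 (h.trans (abs_of_nonneg ((abs_nonneg x).trans h.le)).symm) with rfl | rfl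
    · exact notMem_erase x A hx
    · exact disjoint_left.1 hA ha (mem_neg'.2 (mem_of_mem_erase hx))
  have hne : (sigmaAtLeast A' β).Nonempty :=
    ⟨_, sum_mem_sigmaAtLeast subset_rfl (by rw [card_erase_of_mem ha]; omega)⟩
  set μ := (sigmaAtLeast A' β).max' hne
  obtain ⟨J, hJ, hβJ, hJμ⟩ := mem_sigmaAtLeast.1 (max'_mem _ hne)
  set E := insert 0 ((A' \ J) ∪ -J)
  have hE : ∀ e ∈ E, 0 < a + e := by
    intro e he
    rcases mem_insert.1 he with rfl | he
    · simpa using hapos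
    rcases mem_union.1 he with he | he
    · linarith [neg_abs_le e, hlt e (mem_sdiff.1 he).1]
    · linarith [le_abs_self (-e), hlt (-e) (hJ (mem_neg'.1 he))]
  set high := E.image (fun e => a + ∑ x ∈ J, x + e)
  have hhigh : high ⊆ sigmaAtLeast A β := by
    intro s hs
    obtain ⟨e, he, rfl⟩ := mem_image.1 hs
    exact add_sum_add_mem_sigmaAtLeast ha hJ hβJ he
  have hdisj : Disjoint (sigmaAtLeast A' β) high := by
    rw [disjoint_right]
    intro s hs hs'
    obtain ⟨e, he, rfl⟩ := mem_image.1 hs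
    have := le_max' _ _ hs'
    linarith [hE e he]
  have hcard : #high = #A := by
    rw [card_image_of_injective _ (add_right_injective _),
      card_insert_zero_sdiff_union_neg hA' hJ, card_erase_add_one ha]
  calc #(sigmaAtLeast A' β) + #A = #(sigmaAtLeast A' β ∪ high) := by
        rw [card_union_of_disjoint hdisj, hcard]
    _ ≤ #(sigmaAtLeast A β) :=
        card_le_card (union_subset (sigmaAtLeast_mono (erase_subset a A) β) hhigh)

theorem choose_two_add_one_le_card_sigmaAtLeast {A : Finset ℤ} {β : ℕ} (hA : Disjoint A (-A))
    (hβ : β ≤ #A) : (#A + 1).choose 2 + 1 ≤ #(sigmaAtLeast A β) + (β + 1).choose 2 := by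
  obtain ⟨n, hcard⟩ : ∃ n, #A = n := ⟨_, rfl⟩
  rw [hcard] at hβ ⊢
  induction n, hβ using Nat.le_induction generalizing A with
  | base =>
    have := card_pos.2 ⟨_, sum_mem_sigmaAtLeast (A := A) (β := β) subset_rfl hcard.ge⟩
    omega
  | succ n hβn ih =>
    obtain ⟨a, ha, hmax⟩ := exists_max_image A (|·|) (card_pos.1 (by omega))
    wlog hapos : 0 ≤ a generalizing A a
    · have hmax' : ∀ x ∈ -A, |x| ≤ |-a| := fun x hx => by
        simpa using hmax (-x) (mem_neg'.1 hx)
      have := this (A := -A) (by simpa using hA.symm) (by rw [card_neg, hcard]) (-a)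
        (mem_neg'.2 (by rwa [neg_neg])) hmax' (by linarith)
      rwa [sigmaAtLeast_neg, card_neg] at this
    have hstep := card_sigmaAtLeast_erase_add_card_le (β := β) hA ha
      (fun x hx => (hmax x hx).trans_eq (abs_of_nonneg hapos)) (by omega)
    have hih := ih (A := A.erase a) (hA.neg_of_subset (erase_subset a A))
      (by rw [card_erase_of_mem ha, hcard, Nat.add_sub_cancel])
    have hpascal : (n + 1 + 1).choose 2 = (n + 1).choose 2 + (n + 1) := by
      rw [Nat.choose_succ_succ' (n + 1) 1, Nat.choose_one_right, add_comm]
    omega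

lemma natCast_choose_two (n : ℕ) : ((n.choose 2 : ℕ) : ℤ) = n * (n - 1) / 2 := by
  rw [Nat.choose_two_right, Int.natCast_div]
  cases n <;> simp

theorem stmt_2 (k α : ℕ) (A : Finset ℤ) (hcard : A.card = k)
    (hA : A ∩ A.image (fun x => -x) = {0}) (hα : α ≤ k) :
    ((sigmaAtLeast A α).card : ℤ) ≥
      (k : ℤ) * ((k : ℤ) - 1) / 2 - (α : ℤ) * ((α : ℤ) - 1) / 2 + 1 := by
  have h0 : (0 : ℤ) ∈ A := (mem_inter.1 (hA ▸ mem_singleton_self 0)).1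
  have hA' : Disjoint (A.erase 0) (-A.erase 0) := by
    refine disjoint_left.2 fun x hx hnx => ne_of_mem_erase hx (mem_singleton.1 ?_)
    rw [← hA]
    exact mem_inter.2 ⟨mem_of_mem_erase hx,
      mem_image.2 ⟨-x, mem_of_mem_erase (mem_neg'.1 hnx), neg_neg x⟩⟩
  have hk : #(A.erase 0) + 1 = k := by rw [card_erase_add_one h0, hcard]
  have hbound := choose_two_add_one_le_card_sigmaAtLeast hA' (β := α - 1) (by omega)
  rw [← sigmaAtLeast_eq_sigmaAtLeast_erase_zero h0, hk,
    show (α - 1 + 1).choose 2 = α.choose 2 by cases α <;> rfl] at hbound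
  rw [← natCast_choose_two, ← natCast_choose_two]
  omega
end

section
/- Let r ≥ 1 and let A be a set of k = n + p distinct integers consisting of exactly n ≥ 1 negative integers and exactly p ≥ 1 positive integers (0 ∉ A), and let 𝒜 be the multiset consisting of each element of A with multiplicity exactly r. Let α be an integer with 0 ≤ α ≤ rk − 1 and let m ∈ [1, k] be the integer with (m−1)r ≤ α < mr. If m ≤ n and m ≤ p, then |Σ_α(𝒜)| ≥ r(n(n+1)/2 + p(p+1)/2) + 1. -/
/-!
Split `A` into its negative part `N` and positive part `P`. Taking all of `r • N` together
with any submultiset of `r • P` gives at least `rn > α` terms, and these sums are at most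
`Σ(r • N) + Σ(r • P)`; symmetrically, all of `r • P` together with any submultiset of
`r • N` gives sums at least that value. So
`|Σ_α| + 1 ≥ |subsetSums (r • P)| + |subsetSums (r • N)|`.

A set of `c` positive integers, each taken `r` times, has at least `r c (c + 1) / 2 + 1`
subset sums: if `b` is its largest element and `S` is the total of the other elements (each
`r` times), the sums `t b + S - a` with `1 ≤ t ≤ r` and `a` zero or one of the other
elements are `r c` new sums, all exceeding `S`, and pairwise distinct because `0 ≤ a < b`.
-/

/-- `sigmaSeqAtLeast A r α` is the set of all subsequence sums of the multiset
consisting of each element of `A` with multiplicity `r`, coming from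
submultisets with at least `α` terms. -/
def sigmaSeqAtLeast (A : Finset ℤ) (r α : ℕ) : Finset ℤ :=
  (((r • A.val).powerset.filter (fun B => α ≤ Multiset.card B)).map
    Multiset.sum).toFinset

open Finset

variable {G H : Type*}

section Basic

variable [AddCommMonoid G] [DecidableEq G] {M M' : Multiset G} {x y : G}

def subsetSums (M : Multiset G) : Finset G := (M.powerset.map Multiset.sum).toFinset

lemma mem_subsetSums : x ∈ subsetSums M ↔ ∃ B ≤ M, B.sum = x := by
  simp [subsetSums, Multiset.mem_powerset]

lemma sum_mem_subsetSums (M : Multiset G) : M.sum ∈ subsetSums M :=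
  mem_subsetSums.2 ⟨M, le_rfl, rfl⟩

lemma subsetSums_mono (h : M ≤ M') : subsetSums M ⊆ subsetSums M' := fun _ hx ↦
  let ⟨B, hB, hBx⟩ := mem_subsetSums.1 hx
  mem_subsetSums.2 ⟨B, hB.trans h, hBx⟩

lemma add_mem_subsetSums_add (hx : x ∈ subsetSums M) (hy : y ∈ subsetSums M') :
    x + y ∈ subsetSums (M + M') := by
  obtain ⟨B, hB, rfl⟩ := mem_subsetSums.1 hx
  obtain ⟨B', hB', rfl⟩ := mem_subsetSums.1 hy
  exact mem_subsetSums.2 ⟨B + B', add_le_add hB hB', Multiset.sum_add B B'⟩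

lemma nsmul_mem_subsetSums_replicate {t r : ℕ} (h : t ≤ r) (a : G) :
    t • a ∈ subsetSums (Multiset.replicate r a) :=
  mem_subsetSums.2 ⟨_, (Multiset.replicate_le_replicate a).2 h, Multiset.sum_replicate t a⟩

lemma le_sum_of_mem_subsetSums [PartialOrder G] [IsOrderedAddMonoid G]
    (hM : ∀ z ∈ M, 0 ≤ z) (hx : x ∈ subsetSums M) : x ≤ M.sum := by
  obtain ⟨B, hB, rfl⟩ := mem_subsetSums.1 hx
  obtain ⟨C, rfl⟩ := Multiset.le_iff_exists_add.1 hB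
  rw [Multiset.sum_add]
  exact le_add_of_nonneg_right <|
    Multiset.sum_nonneg fun z hz ↦ hM z (Multiset.mem_add.2 (.inr hz))

lemma sum_le_of_mem_subsetSums [PartialOrder G] [IsOrderedAddMonoid G]
    (hM : ∀ z ∈ M, z ≤ 0) (hx : x ∈ subsetSums M) : M.sum ≤ x :=
  le_sum_of_mem_subsetSums (G := Gᵒᵈ) hM hx

end Basic

section Group

variable [AddCommGroup G] [DecidableEq G] [AddCommGroup H] [DecidableEq H] {M : Multiset G}

lemma sum_sub_mem_subsetSums {a : G} (ha : a ∈ M) : M.sum - a ∈ subsetSums M :=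
  mem_subsetSums.2 ⟨M.erase a, Multiset.erase_le a M, eq_sub_of_add_eq' (Multiset.sum_erase ha)⟩

lemma subsetSums_map_addEquiv (e : G ≃+ H) :
    subsetSums (M.map e) = (subsetSums M).image e := by
  ext y
  simp only [mem_image, mem_subsetSums]
  constructor
  · rintro ⟨B, hB, rfl⟩
    refine ⟨(B.map e.symm).sum, ⟨B.map e.symm, ?_, rfl⟩, ?_⟩
    · simpa [Multiset.map_map] using Multiset.map_le_map (f := e.symm) hB
    · simp [Multiset.map_map, map_multiset_sum]
  · rintro ⟨_, ⟨B, hB, rfl⟩, rfl⟩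
    exact ⟨B.map e, Multiset.map_le_map hB, (map_multiset_sum e B).symm⟩

end Group

lemma Finset.card_add_card_le_card_union_add_one [LinearOrder G] {s t : Finset G} {c : G}
    (hs : ∀ x ∈ s, x ≤ c) (ht : ∀ y ∈ t, c ≤ y) : #s + #t ≤ #(s ∪ t) + 1 := by
  have hinter : s ∩ t ⊆ {c} := fun x hx ↦ by
    rw [mem_inter] at hx
    exact mem_singleton.2 (le_antisymm (hs x hx.1) (ht x hx.2))
  have := card_le_card hinter
  rw [← card_union_add_card_inter, card_singleton] at *
  omega

lemma Int.eq_of_mul_sub_eq_mul_sub {b a a' t t' : ℤ} (ha : 0 ≤ a) (hab : a < b) (ha' : 0 ≤ a')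
    (hab' : a' < b) (h : t * b - a = t' * b - a') : t = t' := by
  rcases lt_trichotomy t t' with h' | h' | h'
  · nlinarith
  · exact h'
  · nlinarith

lemma card_image_mul_add_sub (r : ℕ) {b : ℤ} {s : Finset ℤ}
    (hs : ∀ a ∈ s, 0 ≤ a ∧ a < b) (S : ℤ) :
    #((Icc 1 r ×ˢ s).image fun q : ℕ × ℤ ↦ q.1 * b + (S - q.2)) = r * #s := by
  have hinj :
      Set.InjOn (fun q : ℕ × ℤ ↦ q.1 * b + (S - q.2)) (Icc 1 r ×ˢ s : Finset _) := by
    rintro ⟨t, a⟩ hta ⟨t', a'⟩ hta' h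
    simp only [coe_product, Set.mem_prod, mem_coe] at hta hta' h
    obtain ⟨ha, hab⟩ := hs a hta.2
    obtain ⟨ha', hab'⟩ := hs a' hta'.2
    have htt : (t : ℤ) = t' := Int.eq_of_mul_sub_eq_mul_sub ha hab ha' hab' (by linarith)
    obtain rfl : t = t' := by exact_mod_cast htt
    obtain rfl : a = a' := by linarith
    rfl
  rw [card_image_of_injOn hinj, card_product, Nat.card_Icc, Nat.add_sub_cancel]

lemma card_subsetSums_nsmul_insert_max (r : ℕ) {b : ℤ} {s : Finset ℤ} (hb : 0 < b)
    (hs : ∀ x ∈ s, 0 < x ∧ x < b) :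
    #(subsetSums (r • s.val)) + r * (#s + 1) ≤ #(subsetSums (r • (insert b s).val)) := by
  set S := (r • s.val).sum
  have hbs : b ∉ s := fun h ↦ (hs b h).2.false
  have hval : r • (insert b s).val = Multiset.replicate r b + r • s.val := by
    rw [insert_val_of_notMem hbs, Multiset.nsmul_cons, Multiset.nsmul_singleton]
  have hrange : ∀ a ∈ insert 0 s, 0 ≤ a ∧ a < b := by
    simpa [hb] using fun x hx ↦ ⟨(hs x hx).1.le, (hs x hx).2⟩
  set New := (Icc 1 r ×ˢ insert 0 s).image fun q : ℕ × ℤ ↦ q.1 * b + (S - q.2)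
  have hOld : subsetSums (r • s.val) ⊆ subsetSums (r • (insert b s).val) :=
    subsetSums_mono (hval ▸ Multiset.le_add_left _ _)
  have hNew : New ⊆ subsetSums (r • (insert b s).val) := by
    simp only [New, hval, image_subset_iff, mem_product, mem_Icc, mem_insert, Prod.forall]
    rintro t a ⟨⟨ht, htr⟩, ha⟩
    refine add_mem_subsetSums_add ?_ ?_
    · simpa using nsmul_mem_subsetSums_replicate htr b
    · rcases ha with rfl | ha
      · simpa using sum_mem_subsetSums (r • s.val)
      · exact sum_sub_mem_subsetSums ((Multiset.mem_nsmul_of_ne_zero (by omega)).2 ha)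
  have hOld_le : ∀ x ∈ subsetSums (r • s.val), x ≤ S := fun x ↦
    le_sum_of_mem_subsetSums fun z hz ↦ (hs z (Multiset.mem_of_mem_nsmul hz)).1.le
  have hNew_gt : ∀ x ∈ New, S < x := by
    simp only [New, forall_mem_image, mem_product, mem_Icc, Prod.forall]
    rintro t a ⟨⟨ht, -⟩, ha⟩
    have : b ≤ t * b := le_mul_of_one_le_left hb.le (by exact_mod_cast ht)
    linarith [(hrange a ha).2]
  have hcardNew : #New = r * (#s + 1) := by
    rw [card_image_mul_add_sub r hrange, card_insert_of_notMem fun h ↦ (hs 0 h).1.false]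
  have hdisj : Disjoint (subsetSums (r • s.val)) New :=
    disjoint_left.2 fun x hx hx' ↦ (hOld_le x hx).not_gt (hNew_gt x hx')
  rw [← hcardNew, ← card_union_of_disjoint hdisj]
  exact card_le_card (union_subset hOld hNew)

theorem card_subsetSums_nsmul_of_pos (r : ℕ) {P : Finset ℤ} (hP : ∀ x ∈ P, 0 < x) :
    r * (#P * (#P + 1) / 2) + 1 ≤ #(subsetSums (r • P.val)) := by
  induction P using Finset.induction_on_max with
  | empty => simp [subsetSums]
  | insert b s hlt ih =>
    have hb : 0 < b := hP b (mem_insert_self b s)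
    have hs : ∀ x ∈ s, 0 < x := fun x hx ↦ hP x (mem_insert_of_mem hx)
    have hstep := card_subsetSums_nsmul_insert_max r hb fun x hx ↦ ⟨hs x hx, hlt x hx⟩
    have htri : (#s + 1) * (#s + 1 + 1) / 2 = #s * (#s + 1) / 2 + (#s + 1) := by
      rw [show (#s + 1) * (#s + 1 + 1) = #s * (#s + 1) + (#s + 1) * 2 by ring,
        Nat.add_mul_div_right _ _ two_pos]
    rw [card_insert_of_notMem fun h ↦ (hlt b h).false, htri, Nat.mul_add]
    linarith [ih hs]

theorem card_subsetSums_nsmul_of_neg (r : ℕ) {N : Finset ℤ} (hN : ∀ x ∈ N, x < 0) :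
    r * (#N * (#N + 1) / 2) + 1 ≤ #(subsetSums (r • N.val)) := by
  set e := AddEquiv.neg ℤ
  have hval : r • N.val = (r • (N.map e.toEquiv.toEmbedding).val).map e := by
    simp [Multiset.map_nsmul, Multiset.map_map, e]
  rw [hval, subsetSums_map_addEquiv, card_image_of_injective _ e.injective]
  simpa using card_subsetSums_nsmul_of_pos r (P := N.map e.toEquiv.toEmbedding)
    (by simpa [e] using fun x hx ↦ neg_lt_zero.1 (hN _ hx))

lemma mem_sigmaSeqAtLeast {A : Finset ℤ} {r α : ℕ} {s : ℤ} :
    s ∈ sigmaSeqAtLeast A r α ↔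
      ∃ B ≤ r • A.val, α ≤ Multiset.card B ∧ B.sum = s := by
  simp [sigmaSeqAtLeast, Multiset.mem_powerset, and_assoc]

lemma image_add_subsetSums_subset_sigmaSeqAtLeast {A : Finset ℤ} {r α : ℕ}
    {M M' : Multiset ℤ} (hA : r • A.val = M + M') (hα : α ≤ Multiset.card M) :
    (subsetSums M').image (M.sum + ·) ⊆ sigmaSeqAtLeast A r α := by
  simp only [image_subset_iff]
  intro x hx
  obtain ⟨B, hB, rfl⟩ := mem_subsetSums.1 hx
  refine mem_sigmaSeqAtLeast.2 ⟨M + B, hA ▸ add_le_add le_rfl hB, ?_, Multiset.sum_add M B⟩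
  rw [Multiset.card_add]
  omega

lemma Finset.val_eq_filter_neg_add_filter_pos {A : Finset ℤ} (h0 : (0 : ℤ) ∉ A) :
    A.val = (A.filter (· < 0)).val + (A.filter (0 < ·)).val := by
  have hpos : (A.filter (0 < ·)).val = A.val.filter (¬· < 0) :=
    Multiset.filter_congr fun x hx ↦ by have := ne_of_mem_of_not_mem hx h0; omega
  rw [filter_val, hpos, Multiset.filter_add_not]

lemma card_subsetSums_add_card_subsetSums_le {A N P : Finset ℤ} {r α : ℕ}
    (hA : A.val = N.val + P.val) (hN : ∀ x ∈ N, x < 0) (hP : ∀ x ∈ P, 0 < x)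
    (hαN : α ≤ r * #N) (hαP : α ≤ r * #P) :
    #(subsetSums (r • N.val)) + #(subsetSums (r • P.val)) ≤
      #(sigmaSeqAtLeast A r α) + 1 := by
  set SN := (r • N.val).sum
  set SP := (r • P.val).sum
  have hsplit : r • A.val = r • N.val + r • P.val := by rw [hA, smul_add]
  have hF₁ : (subsetSums (r • P.val)).image (SN + ·) ⊆ sigmaSeqAtLeast A r α :=
    image_add_subsetSums_subset_sigmaSeqAtLeast hsplit (by simpa using hαN)
  have hF₂ : (subsetSums (r • N.val)).image (SP + ·) ⊆ sigmaSeqAtLeast A r α :=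
    image_add_subsetSums_subset_sigmaSeqAtLeast (hsplit.trans (add_comm _ _))
      (by simpa using hαP)
  have hF₁_le : ∀ x ∈ (subsetSums (r • P.val)).image (SN + ·), x ≤ SN + SP :=
    forall_mem_image.2 fun x hx ↦ add_le_add le_rfl <|
      le_sum_of_mem_subsetSums (fun z hz ↦ (hP z (Multiset.mem_of_mem_nsmul hz)).le) hx
  have hF₂_ge : ∀ y ∈ (subsetSums (r • N.val)).image (SP + ·), SN + SP ≤ y :=
    forall_mem_image.2 fun y hy ↦ (add_comm SN SP).trans_le <| add_le_add le_rfl <|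
      sum_le_of_mem_subsetSums (fun z hz ↦ (hN z (Multiset.mem_of_mem_nsmul hz)).le) hy
  have hunion := card_add_card_le_card_union_add_one hF₁_le hF₂_ge
  rw [card_image_of_injective _ (add_right_injective _),
    card_image_of_injective _ (add_right_injective _)] at hunion
  have hsub := card_le_card (union_subset hF₁ hF₂)
  omega

theorem stmt_15_general (n p r α m : ℕ)
    (A : Finset ℤ)
    (hneg : (A.filter (fun x => x < 0)).card = n)
    (hpos : (A.filter (fun x => 0 < x)).card = p)
    (h0 : (0 : ℤ) ∉ A)
    (hmu : α < m * r)
    (hmn : m ≤ n) (hmp : m ≤ p) :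
    ((sigmaSeqAtLeast A r α).card : ℤ) ≥
      (r : ℤ) * ((n : ℤ) * ((n : ℤ) + 1) / 2 + (p : ℤ) * ((p : ℤ) + 1) / 2)
        + 1 := by
  have hαn : α ≤ r * n := by nlinarith
  have hαp : α ≤ r * p := by nlinarith
  have hunion := card_subsetSums_add_card_subsetSums_le (r := r)
    (Finset.val_eq_filter_neg_add_filter_pos h0) (fun x hx ↦ (mem_filter.1 hx).2)
    (fun x hx ↦ (mem_filter.1 hx).2) (hneg ▸ hαn) (hpos ▸ hαp)
  have hN := card_subsetSums_nsmul_of_neg r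
    fun x (hx : x ∈ A.filter (· < 0)) ↦ (mem_filter.1 hx).2
  have hP := card_subsetSums_nsmul_of_pos r
    fun x (hx : x ∈ A.filter (0 < ·)) ↦ (mem_filter.1 hx).2
  rw [hneg] at hN
  rw [hpos] at hP
  have : r * (n * (n + 1) / 2) + r * (p * (p + 1) / 2) + 1 ≤ #(sigmaSeqAtLeast A r α) := by omega
  zify at this
  linarith

theorem stmt_15 (n p r α m : ℕ) (hn : 1 ≤ n) (hp : 1 ≤ p) (hr : 1 ≤ r)
    (A : Finset ℤ) (hcard : A.card = n + p)
    (hneg : (A.filter (fun x => x < 0)).card = n)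
    (hpos : (A.filter (fun x => 0 < x)).card = p)
    (h0 : (0 : ℤ) ∉ A)
    (hα : α ≤ r * (n + p) - 1) (hm1 : 1 ≤ m) (hmk : m ≤ n + p)
    (hml : (m - 1) * r ≤ α) (hmu : α < m * r)
    (hmn : m ≤ n) (hmp : m ≤ p) :
    ((sigmaSeqAtLeast A r α).card : ℤ) ≥
      (r : ℤ) * ((n : ℤ) * ((n : ℤ) + 1) / 2 + (p : ℤ) * ((p : ℤ) + 1) / 2)
        + 1 :=
  stmt_15_general n p r α m A hneg hpos h0 hmu hmn hmp
end
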